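/- If g:[0,1]→[0,1] is strictly increasing with g(1)=1 and u/g(u) is nondecreasing, and C(u,v) is a bivariate copula, then the function C̃(u,v) = C(g(u),v)·u/g(u) (extended by C̃(0,v)=0) is a bivariate copula. -/
import Mathlib


open Set

/-- A bivariate copula: grounded, uniform margins, 2-increasing, with values in [0,1]. -/
def IsCopula (C : ℝ → ℝ → ℝ) : Prop :=
  (∀ u ∈ Icc (0:ℝ) 1, C u 0 = 0 ∧ C 0 u = 0 ∧ C u 1 = u ∧ C 1 u = u) ∧
  (∀ u ∈ Icc (0:ℝ) 1, ∀ v ∈ Icc (0:ℝ) 1, C u v ∈ Icc (0:ℝ) 1) ∧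
  (∀ u₁ u₂ v₁ v₂ : ℝ, u₁ ∈ Icc (0:ℝ) 1 → u₂ ∈ Icc (0:ℝ) 1 → v₁ ∈ Icc (0:ℝ) 1 →
    v₂ ∈ Icc (0:ℝ) 1 → u₁ ≤ u₂ → v₁ ≤ v₂ →
    0 ≤ C u₂ v₂ - C u₂ v₁ - C u₁ v₂ + C u₁ v₁)

/-- the Khoudraji–Liebscher construction
`C̃(u,v) = C(g(u),v)·u/g(u)` (with `C̃(0,v)=0`) is a copula. -/
theorem stmt0 (g : ℝ → ℝ) (C : ℝ → ℝ → ℝ)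
    (hg_mono : StrictMonoOn g (Icc 0 1))
    (hg_maps : ∀ u ∈ Icc (0:ℝ) 1, g u ∈ Icc (0:ℝ) 1)
    (hg1 : g 1 = 1)
    (hratio : MonotoneOn (fun u => u / g u) (Ioc 0 1))
    (hC : IsCopula C) :
    IsCopula (fun u v => if u = 0 then 0 else C (g u) v * u / g u) := by
  obtain ⟨hM, hR, hI⟩ := hC
  have h01 : (0:ℝ) ∈ Icc (0:ℝ) 1 := by norm_num
  have h11 : (1:ℝ) ∈ Icc (0:ℝ) 1 := by norm_num
  have hgpos : ∀ u ∈ Icc (0:ℝ) 1, u ≠ 0 → 0 < g u := by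
    intro u hu hu0
    have h0 : (0:ℝ) ≤ g 0 := (hg_maps 0 h01).1
    have : g 0 < g u := hg_mono h01 hu (lt_of_le_of_ne hu.1 (Ne.symm hu0))
    linarith
  have hratle : ∀ u ∈ Icc (0:ℝ) 1, u ≠ 0 → u / g u ≤ 1 := by
    intro u hu hu0
    have hu' : u ∈ Ioc (0:ℝ) 1 := ⟨lt_of_le_of_ne hu.1 (Ne.symm hu0), hu.2⟩
    have h1' : (1:ℝ) ∈ Ioc (0:ℝ) 1 := by norm_num
    have := hratio hu' h1' hu.2
    simpa [hg1] using this
  -- monotonicity of C in the second variable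
  have hCv : ∀ x ∈ Icc (0:ℝ) 1, ∀ v₁ ∈ Icc (0:ℝ) 1, ∀ v₂ ∈ Icc (0:ℝ) 1,
      v₁ ≤ v₂ → C x v₁ ≤ C x v₂ := by
    intro x hx v₁ hv₁ v₂ hv₂ hv
    have := hI 0 x v₁ v₂ h01 hx hv₁ hv₂ hx.1 hv
    have e1 := (hM v₁ hv₁).2.1
    have e2 := (hM v₂ hv₂).2.1
    linarith
  refine ⟨?_, ?_, ?_⟩
  · intro u hu
    by_cases hu0 : u = 0
    · subst hu0
      simp only [if_pos rfl]
      refine ⟨by simp, by simp, by simp, ?_⟩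
      simp [hg1, (hM 1 h11).1]
    · have hg := hgpos u hu hu0
      have hgu := hg_maps u hu
      simp only [if_neg hu0, if_pos rfl]
      refine ⟨?_, rfl, ?_, ?_⟩
      · rw [(hM (g u) hgu).1]; ring
      · rw [(hM (g u) hgu).2.2.1]; field_simp
      · rw [hg1, (hM u hu).2.2.2]; norm_num
  · intro u hu v hv
    by_cases hu0 : u = 0
    · simp [hu0]
    · have hg := hgpos u hu hu0
      have hgu := hg_maps u hu
      have hr := hR (g u) hgu v hv
      have hle : C (g u) v ≤ g u := by
        have := hI 0 (g u) v 1 h01 hgu hv h11 hgu.1 hv.2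
        have e1 := (hM v hv).2.1
        have e2 := (hM 1 h11).2.1
        have e3 := (hM (g u) hgu).2.2.1
        linarith
      have hupos : 0 < u := lt_of_le_of_ne hu.1 (Ne.symm hu0)
      simp only [if_neg hu0]
      constructor
      · exact div_nonneg (mul_nonneg hr.1 hupos.le) hg.le
      · rw [div_le_one hg]
        nlinarith [hu.2, hr.1]
  · intro u₁ u₂ v₁ v₂ hu₁ hu₂ hv₁ hv₂ hu hv
    by_cases h1 : u₁ = 0
    · subst h1
      by_cases h2 : u₂ = 0
      · subst h2; simp
      · have hg := hgpos u₂ hu₂ h2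
        have hgu := hg_maps u₂ hu₂
        have hmono := hCv (g u₂) hgu v₁ hv₁ v₂ hv₂ hv
        have hupos : 0 < u₂ := lt_of_le_of_ne hu₂.1 (Ne.symm h2)
        simp only [if_neg h2]
        norm_num
        have hq : (0:ℝ) ≤ u₂ / g u₂ := by positivity
        have e : ∀ v, C (g u₂) v * u₂ / g u₂ = C (g u₂) v * (u₂ / g u₂) := fun v => by ring
        rw [e, e]
        nlinarith [mul_le_mul_of_nonneg_right hmono hq]
    · have h2 : u₂ ≠ 0 := by
        intro h; apply h1; have := hu₁.1; have := hu₂.1; linarith [hu, h ▸ hu]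
      have hupos1 : 0 < u₁ := lt_of_le_of_ne hu₁.1 (Ne.symm h1)
      have hupos2 : 0 < u₂ := lt_of_lt_of_le hupos1 hu
      have hg1p := hgpos u₁ hu₁ h1
      have hg2p := hgpos u₂ hu₂ h2
      have hgu1 := hg_maps u₁ hu₁
      have hgu2 := hg_maps u₂ hu₂
      have hab : g u₁ ≤ g u₂ := hg_mono.monotoneOn hu₁ hu₂ hu
      have hst : u₁ / g u₁ ≤ u₂ / g u₂ :=
        hratio ⟨hupos1, hu₁.2⟩ ⟨hupos2, hu₂.2⟩ hu
      have hsp : 0 < u₁ / g u₁ := div_pos hupos1 hg1p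
      have hΔa : 0 ≤ C (g u₁) v₂ - C (g u₁) v₁ := by
        have := hCv (g u₁) hgu1 v₁ hv₁ v₂ hv₂ hv; linarith
      have hΔ : 0 ≤ C (g u₂) v₂ - C (g u₂) v₁ - C (g u₁) v₂ + C (g u₁) v₁ :=
        hI (g u₁) (g u₂) v₁ v₂ hgu1 hgu2 hv₁ hv₂ hab hv
      simp only [if_neg h1, if_neg h2]
      have e1 : ∀ v, C (g u₁) v * u₁ / g u₁ = C (g u₁) v * (u₁ / g u₁) := by
        intro v; ring
      have e2 : ∀ v, C (g u₂) v * u₂ / g u₂ = C (g u₂) v * (u₂ / g u₂) := by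
        intro v; ring
      rw [e1, e1, e2, e2]
      set s := u₁ / g u₁
      set t := u₂ / g u₂
      nlinarith [mul_nonneg (le_trans hsp.le hst) hΔ, mul_nonneg (sub_nonneg.mpr hst) hΔa]
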